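/- For all 1 ≤ i, j ≤ q, the identity M_{i,j} = B_{i,j} + Σ_{k=1}^{min(i,j)−1} M_{i,k} M_{k,j} holds in A (the terms of M_{i,j} grouped according to the highest element of the admissible sequence; for i = j this reads C_{i,i} = B_{i,i} + Σ_{k=1}^{i−1} M_{i,k} M_{k,i}). -/

import Mathlib

/-!
Write `S_{i,j}(n)` for the sum of the path products `B_{i,i₁} ⋯ B_{i_c,j}` over `D_n`, so that
`M_{i,j} = S_{i,j}(min(i,j))`. Since no entry of a sequence in `D_{n+1}` exceeds `n`, admissibility
lets `n` occur at most once, and cutting at that occurrence identifies the sequences containing `n`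
with pairs in `D_n × D_n`, the path product factoring accordingly. Hence
`S_{i,j}(n+1) = S_{i,j}(n) + S_{i,n}(n) S_{n,j}(n)`, and telescoping from `S_{i,j}(1) = B_{i,j}`
gives the identity, because `S_{i,k}(k) = M_{i,k}` and `S_{k,j}(k) = M_{k,j}` for `k < min(i,j)`.
-/

open scoped BigOperators

/-- A finite sequence of positive integers is *admissible* if between any two
occurrences of a number `s` there is an entry greater than `s`. -/
def IsAdmissible (l : List ℕ) : Prop :=
  ∀ (l₁ l₂ l₃ : List ℕ) (s : ℕ), l = l₁ ++ s :: (l₂ ++ s :: l₃) → ∃ t ∈ l₂, s < t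

/-- `Dset n` is the set of admissible sequences all of whose entries lie in
`{1, …, n-1}` (including the empty sequence). -/
def Dset (n : ℕ) : Set (List ℕ) :=
  {l | IsAdmissible l ∧ ∀ x ∈ l, 1 ≤ x ∧ x < n}

/-- The product `B i i₁ * B i₁ i₂ * ⋯ * B i_c j` along a sequence `[i₁, …, i_c]`;
the empty sequence contributes `B i j`. -/
def pathProd {A : Type*} [Ring A] (B : ℕ → ℕ → A) (i j : ℕ) : List ℕ → A
  | [] => B i j
  | a :: l => B i a * pathProd B a j l

/-- `M i j = Σ_{(i₁,…,i_c) ∈ D_{min(i,j)}} B i i₁ ⋯ B i_c j`. -/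
noncomputable def Mpoly {A : Type*} [Ring A] (B : ℕ → ℕ → A) (i j : ℕ) : A :=
  ∑ᶠ l ∈ Dset (min i j), pathProd B i j l

/-- `C i j` for `i < j` sums `B i i₁ ⋯ B i_c j` over sequences with
`(i, i₁, …, i_c) ∈ D_j`; and `C n n = M n n`. -/
noncomputable def Cpoly {A : Type*} [Ring A] (B : ℕ → ℕ → A) (i j : ℕ) : A :=
  if i = j then Mpoly B i j
  else ∑ᶠ l ∈ {l : List ℕ | (i :: l) ∈ Dset j}, pathProd B i j l

/-- The generators `B_{i,j}` of the free noncommutative unital ℤ-algebra. -/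
noncomputable def Bgen : ℕ → ℕ → FreeAlgebra ℤ (ℕ × ℕ) :=
  fun i j => FreeAlgebra.ι ℤ (i, j)

/-- The commuting indeterminates `B_{i,j}` of the polynomial ring `ℤ[B_{i,j}]`. -/
noncomputable def Bcomm : ℕ → ℕ → MvPolynomial (ℕ × ℕ) ℤ :=
  fun i j => MvPolynomial.X (i, j)

lemma IsAdmissible.of_infix {l l' : List ℕ} (h : IsAdmissible l') (hl : l <:+: l') :
    IsAdmissible l := by
  obtain ⟨p, post, rfl⟩ := hl
  intro l₁ l₂ l₃ s rfl
  exact h (p ++ l₁) l₂ (l₃ ++ post) s (by simp)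

lemma IsAdmissible.append_cons {l₁ l₂ : List ℕ} {k : ℕ} (h₁ : IsAdmissible l₁)
    (h₂ : IsAdmissible l₂) (hk₁ : ∀ x ∈ l₁, x < k) (hk₂ : ∀ x ∈ l₂, x < k) :
    IsAdmissible (l₁ ++ k :: l₂) := by
  have hk₁' : k ∉ l₁ := fun h => (hk₁ k h).false
  have hk₂' : k ∉ l₂ := fun h => (hk₂ k h).false
  -- `k` occurs exactly once, so the split around it is unique.
  have split_eq {x z : List ℕ} (h : l₁ ++ k :: l₂ = x ++ k :: z) : l₁ = x ∧ l₂ = z := by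
    obtain ⟨hx, -, hz⟩ := (List.append_cons_inj_of_notMem hk₁' hk₂').mp h
    exact ⟨hx, hz⟩
  intro a b c s h
  have hsk : s ≠ k := by
    rintro rfl
    exact hk₂' ((split_eq h).2 ▸ by simp)
  have hk : k ∈ a ++ s :: (b ++ s :: c) := h ▸ by simp
  simp only [List.mem_append, List.mem_cons, hsk.symm, false_or] at hk
  rcases hk with hka | hkb | hkc
  · obtain ⟨a₁, a₂, rfl⟩ := List.append_of_mem hka
    exact h₂ a₂ b c s (split_eq (by simpa using h)).2
  · have hs : s ∈ l₁ ++ k :: l₂ := h ▸ by simp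
    simp only [List.mem_append, List.mem_cons, hsk, false_or] at hs
    exact ⟨k, hkb, hs.elim (hk₁ s) (hk₂ s)⟩
  · obtain ⟨c₁, c₂, rfl⟩ := List.append_of_mem hkc
    exact h₁ a b c₁ s (split_eq (x := a ++ s :: (b ++ s :: c₁)) (by simpa using h)).1

lemma Dset_of_le_one {n : ℕ} (hn : n ≤ 1) : Dset n = {[]} := by
  ext l
  refine ⟨fun ⟨_, hl⟩ => ?_, by rintro rfl; exact ⟨fun _ _ _ _ h => by simp at h, by simp⟩⟩
  cases l with
  | nil => rfl
  | cons x l => have := hl x (by simp); omega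

lemma notMem_of_mem_Dset {n : ℕ} {l : List ℕ} (h : l ∈ Dset n) : n ∉ l :=
  fun hn => (h.2 n hn).2.false

lemma append_cons_append_cons_notMem_Dset_succ (a b c : List ℕ) (n : ℕ) :
    a ++ n :: (b ++ n :: c) ∉ Dset (n + 1) := by
  rintro ⟨h, hl⟩
  obtain ⟨t, ht, hnt⟩ := h a b c n rfl
  have := hl t (by simp [ht])
  omega

lemma mem_Dset_of_infix_of_notMem {n : ℕ} {l l' : List ℕ} (h : l' ∈ Dset (n + 1))
    (hl : l <:+: l') (hn : n ∉ l) : l ∈ Dset n := by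
  refine ⟨h.1.of_infix hl, fun x hx => ?_⟩
  have := h.2 x (hl.subset hx)
  have : x ≠ n := by rintro rfl; exact hn hx
  omega

lemma Dset_succ {n : ℕ} (hn : 1 ≤ n) :
    Dset (n + 1) = Dset n ∪ (fun p : List ℕ × List ℕ => p.1 ++ n :: p.2) '' (Dset n ×ˢ Dset n) := by
  ext l
  constructor
  · intro hl
    by_cases hnl : n ∈ l
    · obtain ⟨s, t, rfl⟩ := List.append_of_mem hnl
      have hns : n ∉ s := by
        rintro hns
        obtain ⟨u, v, rfl⟩ := List.append_of_mem hns
        exact append_cons_append_cons_notMem_Dset_succ u v t n (by simpa using hl)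
      have hnt : n ∉ t := by
        rintro hnt
        obtain ⟨u, v, rfl⟩ := List.append_of_mem hnt
        exact append_cons_append_cons_notMem_Dset_succ s u v n hl
      exact Or.inr ⟨(s, t), ⟨mem_Dset_of_infix_of_notMem hl (List.infix_append [] s _) hns,
        mem_Dset_of_infix_of_notMem hl ⟨s ++ [n], [], by simp⟩ hnt⟩, rfl⟩
    · exact Or.inl (mem_Dset_of_infix_of_notMem hl (List.infix_refl l) hnl)
  · rintro (⟨h, hl⟩ | ⟨⟨s, t⟩, ⟨⟨hs, hsn⟩, ⟨ht, htn⟩⟩, rfl⟩)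
    · exact ⟨h, fun x hx => by have := hl x hx; omega⟩
    · refine ⟨hs.append_cons ht (fun x hx => (hsn x hx).2) (fun x hx => (htn x hx).2), ?_⟩
      simp only [List.mem_append, List.mem_cons]
      rintro x (hx | rfl | hx)
      · have := hsn x hx; omega
      · omega
      · have := htn x hx; omega

lemma Dset_finite (n : ℕ) : (Dset n).Finite := by
  induction n with
  | zero => simp [Dset_of_le_one]
  | succ n ih =>
    rcases Nat.eq_zero_or_pos n with rfl | hn
    · simp [Dset_of_le_one]
    · rw [Dset_succ hn]
      exact ih.union ((ih.prod ih).image _)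

lemma pathProd_append_cons {A : Type*} [Ring A] (B : ℕ → ℕ → A) (i j k : ℕ) (l₁ l₂ : List ℕ) :
    pathProd B i j (l₁ ++ k :: l₂) = pathProd B i k l₁ * pathProd B k j l₂ := by
  induction l₁ generalizing i with
  | nil => rfl
  | cons a l ih => simp [pathProd, ih, mul_assoc]

lemma finsum_mem_prod_mul {α β R : Type*} [NonUnitalNonAssocSemiring R] {s : Set α} {t : Set β}
    (hs : s.Finite) (ht : t.Finite) (f : α → R) (g : β → R) :
    ∑ᶠ p ∈ s ×ˢ t, f p.1 * g p.2 = (∑ᶠ a ∈ s, f a) * ∑ᶠ b ∈ t, g b := by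
  rw [finsum_mem_eq_finite_toFinset_sum _ (hs.prod ht), finsum_mem_eq_finite_toFinset_sum _ hs,
    finsum_mem_eq_finite_toFinset_sum _ ht, Finset.sum_mul_sum, ← Finset.sum_product']
  congr 1
  ext
  simp

section pathSum

variable {A : Type*} [Ring A] (B : ℕ → ℕ → A)

noncomputable def pathSum (i j n : ℕ) : A :=
  ∑ᶠ l ∈ Dset n, pathProd B i j l

lemma pathSum_succ (i j : ℕ) {n : ℕ} (hn : 1 ≤ n) :
    pathSum B i j (n + 1) = pathSum B i j n + pathSum B i n n * pathSum B n j n := by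
  have hfin := Dset_finite n
  have hdisj : Disjoint (Dset n)
      ((fun p : List ℕ × List ℕ => p.1 ++ n :: p.2) '' (Dset n ×ˢ Dset n)) := by
    rw [Set.disjoint_left]
    rintro l hl ⟨p, -, rfl⟩
    exact notMem_of_mem_Dset hl (by simp)
  have hinj : Set.InjOn (fun p : List ℕ × List ℕ => p.1 ++ n :: p.2) (Dset n ×ˢ Dset n) := by
    rintro ⟨s, t⟩ ⟨hs, ht⟩ ⟨s', t'⟩ - h
    obtain ⟨rfl, -, rfl⟩ :=
      (List.append_cons_inj_of_notMem (notMem_of_mem_Dset hs) (notMem_of_mem_Dset ht)).mp h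
    rfl
  rw [pathSum, Dset_succ hn, finsum_mem_union hdisj hfin ((hfin.prod hfin).image _),
    finsum_mem_image hinj]
  simp only [pathProd_append_cons]
  rw [finsum_mem_prod_mul hfin hfin]
  rfl

lemma pathSum_eq_add_sum (i j n : ℕ) :
    pathSum B i j n = B i j + ∑ k ∈ Finset.Ico 1 n, pathSum B i k k * pathSum B k j k := by
  induction n with
  | zero => simp [pathSum, Dset_of_le_one, pathProd]
  | succ n ih =>
    rcases Nat.eq_zero_or_pos n with rfl | hn
    · simp [pathSum, Dset_of_le_one, pathProd]
    · rw [pathSum_succ B i j hn, ih, Finset.sum_Ico_succ_top hn, add_assoc]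

lemma Mpoly_eq_pathSum (i j : ℕ) : Mpoly B i j = pathSum B i j (min i j) := rfl

lemma Mpoly_eq_add_sum (i j : ℕ) :
    Mpoly B i j = B i j + ∑ k ∈ Finset.Ico 1 (min i j), Mpoly B i k * Mpoly B k j := by
  rw [Mpoly_eq_pathSum, pathSum_eq_add_sum]
  congr 1
  refine Finset.sum_congr rfl fun k hk => ?_
  have hk : k < min i j := (Finset.mem_Ico.mp hk).2
  rw [Mpoly_eq_pathSum, Mpoly_eq_pathSum, min_eq_right (by omega), min_eq_left (by omega)]

end pathSum

theorem M_eq_B_add_sum_MM_general (i j : ℕ) :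
    Mpoly Bgen i j =
      Bgen i j + ∑ k ∈ Finset.Ico 1 (min i j), Mpoly Bgen i k * Mpoly Bgen k j :=
  Mpoly_eq_add_sum Bgen i j

/-- `M_{i,j} = B_{i,j} + Σ_{k=1}^{min(i,j)-1} M_{i,k} M_{k,j}` for `1 ≤ i, j ≤ q`. -/
theorem M_eq_B_add_sum_MM (q i j : ℕ) (hi : 1 ≤ i) (hiq : i ≤ q)
    (hj : 1 ≤ j) (hjq : j ≤ q) :
    Mpoly Bgen i j =
      Bgen i j + ∑ k ∈ Finset.Ico 1 (min i j), Mpoly Bgen i k * Mpoly Bgen k j :=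
  M_eq_B_add_sum_MM_general i j
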